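/- Let μ ∈ (1,2) and n ≥ 1, and suppose f^i(1/2) ≠ 1/2 for every i = 1,…,2n−1. Then there exist an integer k ∈ {n+1,…,2n}, a bit b ∈ {0,1}, and a word w ∈ L_k with T(w) = I_k such that wb ∈ L_{k+1} and T(wb) = Ī_{k'+1} for some integer k' with 1 ≤ k' ≤ k/2. -/

import Mathlib

open Set MeasureTheory

/-- The tent map `f(x) = μx` for `x ≤ 1/2` and `μ(1-x)` for `x ≥ 1/2`. -/
noncomputable def tentMap (μ : ℝ) (x : ℝ) : ℝ :=
  if x ≤ 1/2 then μ * x else μ * (1 - x)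

/-- `tentBit μ x k` is the `(k+1)`-st bit `b_{k+1}` of the tent code of `x`. -/
noncomputable def tentBit (μ x : ℝ) : ℕ → Bool
  | 0 => if 1/2 ≤ x then true else false
  | k + 1 =>
    if (tentMap μ)^[k+1] x < 1/2 then tentBit μ x k
    else if 1/2 < (tentMap μ)^[k+1] x then !(tentBit μ x k)
    else true

/-- The tent code `γ^n(x) = b_1 ⋯ b_n`. -/
noncomputable def tentCode (μ : ℝ) (n : ℕ) (x : ℝ) : List Bool :=
  (List.range n).map (tentBit μ x)

/-- The tent language `L_n = {γ^n(x) : x ∈ [0,1)}`. -/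
def tentLang (μ : ℝ) (n : ℕ) : Set (List Bool) :=
  {w | ∃ x ∈ Set.Ico (0:ℝ) 1, tentCode μ n x = w}

/-- The segment-type `T(w) = {f^n(x) : x ∈ [0,1), γ^n(x) = w}`. -/
def segType (μ : ℝ) (n : ℕ) (w : List Bool) : Set ℝ :=
  {y | ∃ x ∈ Set.Ico (0:ℝ) 1, tentCode μ n x = w ∧ (tentMap μ)^[n] x = y}

/-- The set of segment-types `𝒯_n = {T(w) : w ∈ L_n}`. -/
def typeSet (μ : ℝ) (n : ℕ) : Set (Set ℝ) :=
  {S | ∃ w ∈ tentLang μ n, segType μ n w = S}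

/-- `I_i = T(γ^i(1/2))`. -/
noncomputable def Iseg (μ : ℝ) (i : ℕ) : Set ℝ :=
  segType μ i (tentCode μ i (1/2))

/-- `Ī_i = T(c̄_i)` where `c̄_i` is the bitwise complement of `γ^i(1/2)`. -/
noncomputable def Isegbar (μ : ℝ) (i : ℕ) : Set ℝ :=
  segType μ i ((tentCode μ i (1/2)).map (fun b => !b))

/-- The length of the interval `T(w)` (zero if `T(w)` is empty). -/
noncomputable def segLen (μ : ℝ) (n : ℕ) (w : List Bool) : ℝ :=
  (MeasureTheory.volume (segType μ n w)).toReal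


/-!
For `k ≥ 1` the points of `[0,1)` coded like `1/2` up to length `k` form an interval
`[1/2, r_k)` on which `f^k` is affine with slope `±μ^k`, and those coded by the complement form
the mirror interval `[1 - r_k, 1/2)`. Call `k` a cut when `f^k` maps `[1/2, r_k]` across `1/2`;
then `r_{k+1}` is the preimage of `1/2`, and `f^j (r_j) = f^{j-S} (1/2)` up to the next cut,
`S` being the last cut before `j`. Expansion (`μ^S > 1`) forces a new cut in `(S, 2S]`, and the
gap `k - S` between consecutive cuts is again a cut. With `S` the last cut up to `n` and `k` the
next one, `n < k ≤ 2S ≤ 2n`; the word `c_k 1` codes the part `[y_k, r_k)` of the cylinder beyond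
the preimage `y_k` of `1/2`, and both `T(c_k 1)` and `Ī_{k-S+1}` are the image under `f` of the
half-open interval from `1/2` (included) to `f^{k-S} (1/2)`.
-/

section TentMap

variable {μ : ℝ}

theorem tentMap_of_le {x : ℝ} (hx : x ≤ 1/2) : tentMap μ x = μ * x := if_pos hx

theorem tentMap_of_ge {x : ℝ} (hx : 1/2 ≤ x) : tentMap μ x = μ * (1 - x) := by
  rcases hx.lt_or_eq with hx | rfl
  · exact if_neg hx.not_ge
  · rw [tentMap_of_le le_rfl]; ring

theorem tentMap_half : tentMap μ (1/2) = μ / 2 := by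
  rw [tentMap_of_le le_rfl]; ring

theorem tentMap_one : tentMap μ 1 = 0 := by
  rw [tentMap_of_ge (by norm_num)]; ring

theorem tentMap_one_sub (x : ℝ) : tentMap μ (1 - x) = tentMap μ x := by
  rcases le_total x (1/2) with hx | hx
  · rw [tentMap_of_ge (by linarith), tentMap_of_le hx]; ring
  · rw [tentMap_of_le (by linarith), tentMap_of_ge hx]

theorem iterate_tentMap_one_sub {m : ℕ} (hm : 1 ≤ m) (x : ℝ) :
    (tentMap μ)^[m] (1 - x) = (tentMap μ)^[m] x := by
  obtain ⟨m, rfl⟩ := Nat.exists_eq_add_of_le' hm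
  rw [Function.iterate_succ_apply, Function.iterate_succ_apply, tentMap_one_sub]

end TentMap

section Affine

noncomputable def affineMapThrough (s p a : ℝ) : ℝ →ᵃ[ℝ] ℝ where
  toFun x := p + a * (x - s)
  linear := a • LinearMap.id
  map_vadd' x v := by simp; ring

variable {g : ℝ → ℝ} {s t a : ℝ}

theorem affine_restrict (hg : ∀ x ∈ Icc s t, g x = g s + a * (x - s)) {s' t' : ℝ}
    (hs : s ≤ s') (ht : t' ≤ t) : ∀ x ∈ Icc s' t', g x = g s' + a * (x - s') := by
  intro x hx
  have hx' := hg x ⟨hs.trans hx.1, hx.2.trans ht⟩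
  have hs' := hg s' ⟨hs, hx.1.trans (hx.2.trans ht)⟩
  linear_combination hx' - hs'

theorem image_Icc_of_affine (hst : s ≤ t) (hg : ∀ x ∈ Icc s t, g x = g s + a * (x - s)) :
    g '' Icc s t = uIcc (g s) (g t) := by
  have hL : EqOn g (affineMapThrough s (g s) a) (Icc s t) := hg
  rw [hL.image_eq, ← segment_eq_Icc hst, image_segment, segment_eq_uIcc,
    ← hL (left_mem_Icc.2 hst), ← hL (right_mem_Icc.2 hst)]

theorem image_Ioo_of_affine (hst : s < t) (ha : a ≠ 0)
    (hg : ∀ x ∈ Icc s t, g x = g s + a * (x - s)) :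
    g '' Ioo s t = uIoo (g s) (g t) := by
  have hL : EqOn g (affineMapThrough s (g s) a) (Icc s t) := hg
  have hne : g s ≠ g t := by
    rw [hg t ⟨hst.le, le_rfl⟩]
    simpa [sub_eq_zero, ha] using hst.ne'
  rw [(hL.mono Ioo_subset_Icc_self).image_eq, ← openSegment_eq_Ioo hst, image_openSegment,
    ← hL (left_mem_Icc.2 hst.le), ← hL (right_mem_Icc.2 hst.le), openSegment_eq_Ioo' hne]
  rfl

theorem affine_crossing_spec {c : ℝ} (hst : s < t)
    (hg : ∀ x ∈ Icc s t, g x = g s + a * (x - s))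
    (hc : (g s - c) * (g t - c) < 0) :
    s < s + (t - s) * (c - g s) / (g t - g s) ∧ s + (t - s) * (c - g s) / (g t - g s) < t ∧
      g (s + (t - s) * (c - g s) / (g t - g s)) = c := by
  have hd : g t - g s ≠ 0 := fun h => by
    rw [show g t = g s by linarith] at hc
    nlinarith [sq_nonneg (g s - c)]
  have hθ0 : 0 < (c - g s) / (g t - g s) := by
    rw [div_pos_iff]
    exact pos_and_pos_or_neg_and_neg_of_mul_pos (by nlinarith [sq_nonneg (c - g s)])
  have hθ1 : 0 < (g t - c) / (g t - g s) := by
    rw [div_pos_iff]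
    exact pos_and_pos_or_neg_and_neg_of_mul_pos (by nlinarith [sq_nonneg (g t - c)])
  have hθ : (c - g s) / (g t - g s) < 1 := by
    have : (g t - c) / (g t - g s) = 1 - (c - g s) / (g t - g s) := by field_simp; ring
    linarith
  rw [mul_div_assoc]
  refine ⟨by nlinarith, by nlinarith, ?_⟩
  have hat : a * (t - s) = g t - g s := by linarith [hg t ⟨hst.le, le_rfl⟩]
  rw [hg _ ⟨by nlinarith, by nlinarith⟩, add_sub_cancel_left, ← mul_assoc, hat,
    mul_div_cancel₀ _ hd]
  ring

theorem tentMap_comp_affine {μ : ℝ} (hμ : 0 ≤ μ) (hst : s ≤ t)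
    (hg : ∀ x ∈ Icc s t, g x = g s + a * (x - s)) (hside : 0 ≤ (g s - 1/2) * (g t - 1/2)) :
    ∃ a', |a'| = μ * |a| ∧
      ∀ x ∈ Icc s t, tentMap μ (g x) = tentMap μ (g s) + a' * (x - s) := by
  have hmem : ∀ x ∈ Icc s t, g x ∈ uIcc (g s) (g t) := fun x hx =>
    image_Icc_of_affine hst hg ▸ mem_image_of_mem g hx
  rcases mul_nonneg_iff.1 hside with ⟨hs, ht⟩ | ⟨hs, ht⟩
  · rw [sub_nonneg] at hs ht
    refine ⟨-(μ * a), by rw [abs_neg, abs_mul, abs_of_nonneg hμ], fun x hx => ?_⟩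
    have hx' : 1/2 ≤ g x := by
      rcases mem_uIcc.1 (hmem x hx) with h | h <;> linarith [h.1]
    rw [tentMap_of_ge hx', tentMap_of_ge hs, hg x hx]; ring
  · rw [sub_nonpos] at hs ht
    refine ⟨μ * a, by rw [abs_mul, abs_of_nonneg hμ], fun x hx => ?_⟩
    have hx' : g x ≤ 1/2 := by
      rcases mem_uIcc.1 (hmem x hx) with h | h <;> linarith [h.2]
    rw [tentMap_of_le hx', tentMap_of_le hs, hg x hx]; ring

end Affine

section Kneading

variable {μ : ℝ} {k : ℕ}

/-- For `k ≥ 1`, the points `x ∈ [0,1)` whose tent code of length `k` is that of `1/2` form the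
interval `[1/2, kneadEnd μ k)`, as long as the critical orbit avoids `1/2` before time `k`.
The interval shrinks exactly when `f^[k]` maps it across `1/2`; it is then cut at the preimage
of `1/2`. -/
noncomputable def kneadEnd (μ : ℝ) : ℕ → ℝ
  | 0 => 1
  | k + 1 =>
    if ((tentMap μ)^[k] (1/2) - 1/2) * ((tentMap μ)^[k] (kneadEnd μ k) - 1/2) < 0 then
      1/2 + (kneadEnd μ k - 1/2) * (1/2 - (tentMap μ)^[k] (1/2)) /
        ((tentMap μ)^[k] (kneadEnd μ k) - (tentMap μ)^[k] (1/2))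
    else kneadEnd μ k

/-- `f^[k]` maps the endpoints of `[1/2, kneadEnd μ k]` strictly to opposite sides of `1/2`. -/
def IsCut (μ : ℝ) (k : ℕ) : Prop :=
  ((tentMap μ)^[k] (1/2) - 1/2) * ((tentMap μ)^[k] (kneadEnd μ k) - 1/2) < 0

noncomputable def cutPoint (μ : ℝ) (k : ℕ) : ℝ :=
  1/2 + (kneadEnd μ k - 1/2) * (1/2 - (tentMap μ)^[k] (1/2)) /
    ((tentMap μ)^[k] (kneadEnd μ k) - (tentMap μ)^[k] (1/2))

theorem kneadEnd_succ_of_isCut (h : IsCut μ k) : kneadEnd μ (k + 1) = cutPoint μ k :=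
  if_pos h

theorem kneadEnd_succ_of_not_isCut (h : ¬IsCut μ k) : kneadEnd μ (k + 1) = kneadEnd μ k :=
  if_neg h

theorem kneadEnd_one : kneadEnd μ 1 = 1 :=
  kneadEnd_succ_of_not_isCut (by simp [IsCut])

theorem isCut_one (hμ : 1 < μ) : IsCut μ 1 := by
  simp only [IsCut, kneadEnd_one, Function.iterate_one, tentMap_half, tentMap_one]
  nlinarith

theorem IsCut.iterate_half_ne (h : IsCut μ k) : (tentMap μ)^[k] (1/2) ≠ 1/2 := fun h' => by
  rw [IsCut, h', sub_self, zero_mul] at h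
  exact lt_irrefl 0 h

theorem IsCut.iterate_kneadEnd_ne (h : IsCut μ k) : (tentMap μ)^[k] (kneadEnd μ k) ≠ 1/2 :=
  fun h' => by
    rw [IsCut, h', sub_self, mul_zero] at h
    exact lt_irrefl 0 h

structure CylinderGeometry (μ : ℝ) (k : ℕ) : Prop where
  half_lt : 1/2 < kneadEnd μ k
  le_one : kneadEnd μ k ≤ 1
  affine : ∃ a, |a| = μ ^ k ∧ ∀ x ∈ Icc (1/2) (kneadEnd μ k),
    (tentMap μ)^[k] x = (tentMap μ)^[k] (1/2) + a * (x - 1/2)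

theorem CylinderGeometry.cutPoint_mem (hG : CylinderGeometry μ k) (hcut : IsCut μ k) :
    cutPoint μ k ∈ Ioo (1/2) (kneadEnd μ k) ∧ (tentMap μ)^[k] (cutPoint μ k) = 1/2 := by
  obtain ⟨a, -, hf⟩ := hG.affine
  obtain ⟨h1, h2, h3⟩ := affine_crossing_spec hG.half_lt hf hcut
  exact ⟨⟨h1, h2⟩, h3⟩

theorem CylinderGeometry.succ (hμ : 0 ≤ μ) (hG : CylinderGeometry μ k) :
    CylinderGeometry μ (k + 1) := by
  obtain ⟨a, ha, hf⟩ := hG.affine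
  have key : ∀ r, 1/2 < r → r ≤ kneadEnd μ k →
      0 ≤ ((tentMap μ)^[k] (1/2) - 1/2) * ((tentMap μ)^[k] r - 1/2) →
      ∃ a', |a'| = μ ^ (k + 1) ∧ ∀ x ∈ Icc (1/2) r,
        (tentMap μ)^[k + 1] x = (tentMap μ)^[k + 1] (1/2) + a' * (x - 1/2) := by
    intro r hr hrk hside
    obtain ⟨a', ha', hf'⟩ := tentMap_comp_affine hμ hr.le (affine_restrict hf le_rfl hrk) hside
    refine ⟨a', by rw [ha', ha, pow_succ, mul_comm], fun x hx => ?_⟩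
    simpa only [Function.iterate_succ_apply'] using hf' x hx
  by_cases hcut : IsCut μ k
  · obtain ⟨⟨hy1, hy2⟩, hy⟩ := hG.cutPoint_mem hcut
    have hr := kneadEnd_succ_of_isCut hcut
    exact ⟨hr ▸ hy1, hr ▸ hy2.le.trans hG.le_one,
      hr ▸ key _ hy1 hy2.le (by rw [hy, sub_self, mul_zero])⟩
  · have hr := kneadEnd_succ_of_not_isCut hcut
    exact ⟨hr ▸ hG.half_lt, hr ▸ hG.le_one, hr ▸ key _ hG.half_lt le_rfl (not_lt.1 hcut)⟩

theorem cylinderGeometry (hμ : 1 < μ) (hk : 1 ≤ k) : CylinderGeometry μ k := by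
  induction k, hk using Nat.le_induction with
  | base =>
    refine ⟨by rw [kneadEnd_one]; norm_num, kneadEnd_one.le, -μ,
      by simp [abs_of_pos (by linarith : 0 < μ)], ?_⟩
    intro x hx
    rw [kneadEnd_one] at hx
    simp only [Function.iterate_one, tentMap_half, tentMap_of_ge hx.1]
    ring
  | succ k _ ih => exact ih.succ (by linarith)

end Kneading

section Cuts

variable {μ : ℝ}

theorem cutPoint_mem (hμ : 1 < μ) {k : ℕ} (hk : 1 ≤ k) (hcut : IsCut μ k) :
    cutPoint μ k ∈ Ioo (1/2) (kneadEnd μ k) ∧ (tentMap μ)^[k] (cutPoint μ k) = 1/2 :=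
  (cylinderGeometry hμ hk).cutPoint_mem hcut

theorem isCut_of_mem_Ioo (hμ : 1 < μ) {k : ℕ} (hk : 1 ≤ k) {u : ℝ}
    (hu : u ∈ Ioo (1/2) (kneadEnd μ k)) (h : (tentMap μ)^[k] u = 1/2) : IsCut μ k := by
  obtain ⟨a, ha, hf⟩ := (cylinderGeometry hμ hk).affine
  have ha0 : a ≠ 0 := abs_pos.1 (by rw [ha]; exact pow_pos (by linarith) k)
  have hu' := hf u ⟨hu.1.le, hu.2.le⟩
  have hr := hf _ ⟨(cylinderGeometry hμ hk).half_lt.le, le_rfl⟩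
  have e1 : (tentMap μ)^[k] (1/2) - 1/2 = -(a * (u - 1/2)) := by linear_combination h - hu'
  have e2 : (tentMap μ)^[k] (kneadEnd μ k) - 1/2 = a * (kneadEnd μ k - u) := by
    linear_combination hr - hu' + h
  rw [IsCut, e1, e2]
  nlinarith [mul_pos (mul_self_pos.2 ha0) (mul_pos (sub_pos.2 hu.1) (sub_pos.2 hu.2))]

theorem kneadEnd_le_of_not_isCut (hμ : 1 < μ) {k : ℕ} (hk : 1 ≤ k) (hcut : ¬IsCut μ k)
    {u : ℝ} (hu : 1/2 < u) (h : (tentMap μ)^[k] u = 1/2) : kneadEnd μ k ≤ u :=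
  not_lt.1 fun h' => hcut (isCut_of_mem_Ioo hμ hk ⟨hu, h'⟩ h)

theorem cutPoint_sub_half_lt (hμ : 1 < μ) {k : ℕ} (hk : 1 ≤ k) (hcut : IsCut μ k) :
    cutPoint μ k - 1/2 < |(tentMap μ)^[k] (1/2) - 1/2| := by
  obtain ⟨⟨hy1, hy2⟩, hy⟩ := cutPoint_mem hμ hk hcut
  obtain ⟨a, ha, hf⟩ := (cylinderGeometry hμ hk).affine
  have e : (tentMap μ)^[k] (1/2) - 1/2 = -(a * (cutPoint μ k - 1/2)) := by
    linear_combination hy - hf _ ⟨hy1.le, hy2.le⟩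
  rw [e, abs_neg, abs_mul, ha, abs_of_pos (sub_pos.2 hy1)]
  nlinarith [one_lt_pow₀ hμ (by omega : k ≠ 0), sub_pos.2 hy1]

theorem kneadEnd_eq_of_forall_not_isCut {S j : ℕ} (hSj : S < j)
    (hno : ∀ i, S < i → i < j → ¬IsCut μ i) : kneadEnd μ j = kneadEnd μ (S + 1) := by
  induction j, hSj using Nat.le_induction with
  | base => rfl
  | succ j hj ih =>
    rw [kneadEnd_succ_of_not_isCut (hno j (by omega) (by omega)),
      ih fun i h1 h2 => hno i h1 (by omega)]

theorem iterate_kneadEnd_eq_half (hμ : 1 < μ) {S j : ℕ} (hS : 1 ≤ S) (hcut : IsCut μ S)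
    (hSj : S < j) (hno : ∀ i, S < i → i < j → ¬IsCut μ i) :
    (tentMap μ)^[S] (kneadEnd μ j) = 1/2 := by
  rw [kneadEnd_eq_of_forall_not_isCut hSj hno, kneadEnd_succ_of_isCut hcut]
  exact (cutPoint_mem hμ hS hcut).2

theorem iterate_kneadEnd_eq (hμ : 1 < μ) {S j : ℕ} (hS : 1 ≤ S) (hcut : IsCut μ S)
    (hSj : S < j) (hno : ∀ i, S < i → i < j → ¬IsCut μ i) :
    (tentMap μ)^[j] (kneadEnd μ j) = (tentMap μ)^[j - S] (1/2) := by
  rw [← iterate_kneadEnd_eq_half hμ hS hcut hSj hno, ← Function.iterate_add_apply,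
    Nat.sub_add_cancel hSj.le]

theorem image_Ioo_kneadEnd_succ (hμ : 1 < μ) {S : ℕ} (hS : 1 ≤ S) (hcut : IsCut μ S) :
    (tentMap μ)^[S] '' Ioo (1/2) (kneadEnd μ (S + 1)) = uIoo ((tentMap μ)^[S] (1/2)) (1/2) := by
  obtain ⟨⟨hy1, hy2⟩, hy⟩ := cutPoint_mem hμ hS hcut
  obtain ⟨a, ha, hf⟩ := (cylinderGeometry hμ hS).affine
  have ha0 : a ≠ 0 := abs_pos.1 (by rw [ha]; exact pow_pos (by linarith) S)
  rw [kneadEnd_succ_of_isCut hcut, image_Ioo_of_affine hy1 ha0 (affine_restrict hf le_rfl hy2.le),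
    hy]

/-- Pulled back by `f^[S]` into `(1/2, kneadEnd μ (S + 1))`, such a point would create a cut
between `S` and `k`. -/
theorem iterate_ne_half_of_mem_uIoo (hμ : 1 < μ) {S k m : ℕ} (hS : 1 ≤ S) (hcut : IsCut μ S)
    (hno : ∀ i, S < i → i < k → ¬IsCut μ i) (hm : 1 ≤ m) (hmk : S + m < k) {q : ℝ}
    (hq : q ∈ uIoo ((tentMap μ)^[S] (1/2)) (1/2)) : (tentMap μ)^[m] q ≠ 1/2 := by
  intro hqm
  rw [← image_Ioo_kneadEnd_succ hμ hS hcut] at hq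
  obtain ⟨x, hx, rfl⟩ := hq
  refine hno (m + S) (by omega) (by omega) (isCut_of_mem_Ioo hμ (by omega) (u := x) ?_ ?_)
  · rwa [kneadEnd_eq_of_forall_not_isCut (by omega : S < m + S)
      fun i h1 h2 => hno i h1 (by omega)]
  · rwa [Function.iterate_add_apply]

theorem exists_isCut_Ioc_two_mul (hμ : 1 < μ) {S : ℕ} (hS : 1 ≤ S) (hcut : IsCut μ S) :
    ∃ k, S < k ∧ k ≤ 2 * S ∧ IsCut μ k := by
  by_contra! hno
  obtain ⟨⟨hy1, -⟩, hy⟩ := cutPoint_mem hμ hS hcut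
  have hlt := cutPoint_sub_half_lt hμ hS hcut
  obtain ⟨t, ht, hft⟩ :
      ∃ t ∈ uIoo ((tentMap μ)^[S] (1/2)) (1/2), (tentMap μ)^[S] t = 1/2 := by
    rcases lt_or_gt_of_ne hcut.iterate_half_ne with hv | hv
    · rw [abs_of_neg (by linarith)] at hlt
      exact ⟨1 - cutPoint μ S, by rw [uIoo_of_lt hv]; constructor <;> linarith,
        by rw [iterate_tentMap_one_sub hS, hy]⟩
    · rw [abs_of_pos (by linarith)] at hlt
      exact ⟨cutPoint μ S, by rw [uIoo_of_gt hv]; constructor <;> linarith, hy⟩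
  exact iterate_ne_half_of_mem_uIoo hμ hS hcut (k := 2 * S + 1)
    (fun i h1 h2 => hno i h1 (by omega)) hS (by omega) ht hft

theorem exists_next_isCut (hμ : 1 < μ) {S : ℕ} (hS : 1 ≤ S) (hcut : IsCut μ S) :
    ∃ k, S < k ∧ k ≤ 2 * S ∧ IsCut μ k ∧ ∀ i, S < i → i < k → ¬IsCut μ i := by
  classical
  have h := exists_isCut_Ioc_two_mul hμ hS hcut
  obtain ⟨hSk, hk2S, hkcut⟩ := Nat.find_spec h
  exact ⟨Nat.find h, hSk, hk2S, hkcut,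
    fun i h1 h2 hi => Nat.find_min h h2 ⟨h1, by omega, hi⟩⟩

theorem exists_last_isCut (hμ : 1 < μ) {n : ℕ} (hn : 1 ≤ n) :
    ∃ S, 1 ≤ S ∧ S ≤ n ∧ IsCut μ S ∧ ∀ i, S < i → i ≤ n → ¬IsCut μ i := by
  classical
  exact ⟨Nat.findGreatest (IsCut μ) n, Nat.le_findGreatest hn (isCut_one hμ),
    Nat.findGreatest_le n, Nat.findGreatest_spec hn (isCut_one hμ),
    fun i h1 h2 => Nat.findGreatest_is_greatest h1 h2⟩

theorem isCut_sub (hμ : 1 < μ) {S k : ℕ} (hS : 1 ≤ S) (hcutS : IsCut μ S) (hSk : S < k)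
    (hno : ∀ i, S < i → i < k → ¬IsCut μ i) (hcutk : IsCut μ k) : IsCut μ (k - S) := by
  obtain ⟨hy, hfy⟩ := cutPoint_mem hμ (by omega) hcutk
  set z := (tentMap μ)^[S] (cutPoint μ k)
  have hz : z ∈ uIoo ((tentMap μ)^[S] (1/2)) (1/2) := by
    rw [← image_Ioo_kneadEnd_succ hμ hS hcutS, ← kneadEnd_eq_of_forall_not_isCut hSk hno]
    exact mem_image_of_mem _ hy
  have hzk : (tentMap μ)^[k - S] z = 1/2 := by
    rw [← Function.iterate_add_apply, Nat.sub_add_cancel hSk.le, hfy]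
  by_contra hk'
  have hk'2 : 2 ≤ k - S := by
    by_contra h
    exact hk' (by rw [show k - S = 1 by omega]; exact isCut_one hμ)
  -- Otherwise `z`, folded to the right of `1/2`, lies beyond `kneadEnd μ (k - S)`; that endpoint,
  -- moved to the side of `z`, is then strictly between `f^[S] (1/2)` and `1/2` and reaches `1/2`
  -- at the last cut `p < k - S`, too early.
  obtain ⟨p, hp1, hpk, hpcut, hpno⟩ := exists_last_isCut hμ (n := k - S - 1) (by omega)
  have hrp : (tentMap μ)^[p] (kneadEnd μ (k - S)) = 1/2 :=
    iterate_kneadEnd_eq_half hμ hp1 hpcut (by omega) fun i h1 h2 => hpno i h1 (by omega)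
  have hr := (cylinderGeometry hμ (by omega : 1 ≤ k - S)).half_lt
  have hA : ∀ q ∈ uIoo ((tentMap μ)^[S] (1/2)) (1/2), (tentMap μ)^[p] q ≠ 1/2 :=
    fun q hq => iterate_ne_half_of_mem_uIoo hμ hS hcutS hno hp1 (by omega) hq
  rcases lt_or_gt_of_ne hcutS.iterate_half_ne with hv | hv
  · rw [uIoo_of_lt hv] at hz
    have h1 := kneadEnd_le_of_not_isCut hμ (by omega) hk' (u := 1 - z) (by linarith [hz.2])
      (by rw [iterate_tentMap_one_sub (by omega), hzk])
    exact hA (1 - kneadEnd μ (k - S)) (by rw [uIoo_of_lt hv]; constructor <;> linarith [hz.1])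
      (by rw [iterate_tentMap_one_sub hp1, hrp])
  · rw [uIoo_of_gt hv] at hz
    have h1 := kneadEnd_le_of_not_isCut hμ (by omega) hk' hz.1 hzk
    exact hA (kneadEnd μ (k - S)) (by rw [uIoo_of_gt hv]; constructor <;> linarith [hz.2]) hrp

theorem image_Ico_cutPoint (hμ : 1 < μ) {k : ℕ} (hk : 1 ≤ k) (hcut : IsCut μ k) :
    (tentMap μ)^[k] '' Ico (cutPoint μ k) (kneadEnd μ k) =
      insert (1/2) (uIoo (1/2) ((tentMap μ)^[k] (kneadEnd μ k))) := by
  obtain ⟨⟨hy1, hy2⟩, hy⟩ := cutPoint_mem hμ hk hcut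
  obtain ⟨a, ha, hf⟩ := (cylinderGeometry hμ hk).affine
  have ha0 : a ≠ 0 := abs_pos.1 (by rw [ha]; exact pow_pos (by linarith) k)
  rw [← Ioo_insert_left hy2, image_insert_eq,
    image_Ioo_of_affine hy2 ha0 (affine_restrict hf hy1.le le_rfl), hy]

theorem image_Ico_one_sub_cutPoint (hμ : 1 < μ) {k : ℕ} (hk : 1 ≤ k) (hcut : IsCut μ k) :
    (tentMap μ)^[k] '' Ico (1 - cutPoint μ k) (1/2) =
      insert (1/2) (uIoo (1/2) ((tentMap μ)^[k] (1/2))) := by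
  obtain ⟨⟨hy1, hy2⟩, hy⟩ := cutPoint_mem hμ hk hcut
  obtain ⟨a, ha, hf⟩ := (cylinderGeometry hμ hk).affine
  have ha0 : a ≠ 0 := abs_pos.1 (by rw [ha]; exact pow_pos (by linarith) k)
  have hmir : Ico (1 - cutPoint μ k) (1/2) = (fun x => 1 - x) '' Ioc (1/2) (cutPoint μ k) := by
    rw [image_const_sub_Ioc]; norm_num
  rw [hmir, image_image]
  simp_rw [iterate_tentMap_one_sub hk]
  rw [← Ioo_insert_right hy1, image_insert_eq,
    image_Ioo_of_affine hy1 ha0 (affine_restrict hf le_rfl hy2.le), hy, uIoo_comm]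

end Cuts

section Codes

variable {μ : ℝ}

theorem tentBit_succ_of_ne {x : ℝ} {k : ℕ} (h : (tentMap μ)^[k + 1] x ≠ 1/2) :
    tentBit μ x (k + 1) = (tentBit μ x k ^^ decide (1/2 < (tentMap μ)^[k + 1] x)) := by
  rw [tentBit]
  rcases lt_or_gt_of_ne h with h | h
  · rw [if_pos h, decide_eq_false h.not_gt, Bool.xor_false]
  · rw [if_neg h.not_gt, if_pos h, decide_eq_true h, Bool.xor_true]

theorem tentBit_succ_of_eq {x : ℝ} {k : ℕ} (h : (tentMap μ)^[k + 1] x = 1/2) :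
    tentBit μ x (k + 1) = true := by
  rw [tentBit, if_neg h.not_lt, if_neg h.not_gt]

theorem tentBit_succ_eq_iff_of_mul_pos {x y : ℝ} {k l : ℕ}
    (h : 0 < ((tentMap μ)^[k + 1] x - 1/2) * ((tentMap μ)^[l + 1] y - 1/2)) :
    tentBit μ x (k + 1) = tentBit μ y (l + 1) ↔ tentBit μ x k = tentBit μ y l := by
  rcases pos_and_pos_or_neg_and_neg_of_mul_pos h with ⟨hx, hy⟩ | ⟨hx, hy⟩
  · rw [sub_pos] at hx hy
    rw [tentBit_succ_of_ne hx.ne', tentBit_succ_of_ne hy.ne', decide_eq_true hx,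
      decide_eq_true hy]
    cases tentBit μ x k <;> cases tentBit μ y l <;> decide
  · rw [sub_neg] at hx hy
    rw [tentBit_succ_of_ne hx.ne, tentBit_succ_of_ne hy.ne, decide_eq_false hx.not_gt,
      decide_eq_false hy.not_gt]
    cases tentBit μ x k <;> cases tentBit μ y l <;> decide

theorem tentBit_succ_eq_iff_of_mul_neg {x y : ℝ} {k l : ℕ}
    (h : ((tentMap μ)^[k + 1] x - 1/2) * ((tentMap μ)^[l + 1] y - 1/2) < 0) :
    tentBit μ x (k + 1) = tentBit μ y (l + 1) ↔ tentBit μ x k ≠ tentBit μ y l := by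
  rcases mul_neg_iff.1 h with ⟨hx, hy⟩ | ⟨hx, hy⟩
  · rw [sub_pos] at hx
    rw [sub_neg] at hy
    rw [tentBit_succ_of_ne hx.ne', tentBit_succ_of_ne hy.ne, decide_eq_true hx,
      decide_eq_false hy.not_gt]
    cases tentBit μ x k <;> cases tentBit μ y l <;> decide
  · rw [sub_neg] at hx
    rw [sub_pos] at hy
    rw [tentBit_succ_of_ne hx.ne, tentBit_succ_of_ne hy.ne', decide_eq_false hx.not_gt,
      decide_eq_true hy]
    cases tentBit μ x k <;> cases tentBit μ y l <;> decide

theorem tentBit_add_ne_of_forall_mul_pos {x y : ℝ} {p q m : ℕ}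
    (h0 : tentBit μ x p ≠ tentBit μ y q)
    (hside : ∀ i, 1 ≤ i → i ≤ m →
      0 < ((tentMap μ)^[p + i] x - 1/2) * ((tentMap μ)^[q + i] y - 1/2)) :
    tentBit μ x (p + m) ≠ tentBit μ y (q + m) := by
  induction m with
  | zero => exact h0
  | succ m ih =>
    have hs : 0 < ((tentMap μ)^[p + m + 1] x - 1/2) * ((tentMap μ)^[q + m + 1] y - 1/2) :=
      hside (m + 1) (by omega) le_rfl
    rw [← add_assoc, ← add_assoc, Ne, tentBit_succ_eq_iff_of_mul_pos hs]
    exact ih fun i h1 h2 => hside i h1 (by omega)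

theorem tentBit_half_zero : tentBit μ (1/2) 0 = true := by
  simp [tentBit]

theorem tentBit_half_one (hμ : 1 < μ) : tentBit μ (1/2) 1 = false := by
  have hv : (tentMap μ)^[0 + 1] (1/2) = μ / 2 := tentMap_half
  have h : 1/2 < (tentMap μ)^[0 + 1] (1/2) := by rw [hv]; linarith
  rw [tentBit_succ_of_ne h.ne', tentBit_half_zero, decide_eq_true h]
  rfl

theorem tentBit_half_of_isCut (hμ : 1 < μ) {k : ℕ} (hk : 1 ≤ k) (hcut : IsCut μ k)
    (hcrit : ∀ i, 1 ≤ i → i < k → (tentMap μ)^[i] (1/2) ≠ 1/2) :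
    tentBit μ (1/2) k = false := by
  induction k using Nat.strong_induction_on with
  | _ k IH =>
  rcases hk.eq_or_lt with rfl | hk2
  · exact tentBit_half_one hμ
  obtain ⟨S, hS, hSk, hcutS, hno⟩ := exists_last_isCut hμ (n := k - 1) (by omega)
  have hno' : ∀ i, S < i → i < k → ¬IsCut μ i := fun i h1 h2 => hno i h1 (by omega)
  have hcut' := isCut_sub hμ hS hcutS (by omega) hno' hcut
  obtain ⟨m, rfl⟩ : ∃ m, k = S + m + 1 := ⟨k - S - 1, by omega⟩
  rw [show S + m + 1 - S = m + 1 by omega] at hcut'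
  have hbitS := IH S (by omega) hS hcutS fun i h1 h2 => hcrit i h1 (by omega)
  have hbit' := IH (m + 1) (by omega) (by omega) hcut' fun i h1 h2 => hcrit i h1 (by omega)
  -- between two consecutive cuts the critical orbit shadows its own beginning
  have hshift : tentBit μ (1/2) (S + m) ≠ tentBit μ (1/2) (0 + m) := by
    refine tentBit_add_ne_of_forall_mul_pos (by rw [hbitS, tentBit_half_zero]; decide)
      fun i h1 h2 => ?_
    have hw := iterate_kneadEnd_eq hμ hS hcutS (j := S + i) (by omega)
      fun j h1 h2 => hno' j h1 (by omega)
    rw [show S + i - S = i by omega] at hw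
    have hle := not_lt.1 (hno' (S + i) (by omega) (by omega))
    rw [hw] at hle
    rw [zero_add]
    exact lt_of_le_of_ne hle (mul_ne_zero (sub_ne_zero.2 (hcrit (S + i) (by omega) (by omega)))
      (sub_ne_zero.2 (hcrit i h1 (by omega)))).symm
  have hopp := hcut
  rw [IsCut, iterate_kneadEnd_eq hμ hS hcutS (by omega) hno', show S + m + 1 - S = m + 1 by omega]
    at hopp
  rw [← hbit', tentBit_succ_eq_iff_of_mul_neg hopp]
  simpa using hshift

end Codes

section Cylinders

variable {μ : ℝ} {k : ℕ}

theorem tentCode_succ (x : ℝ) (k : ℕ) :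
    tentCode μ (k + 1) x = tentCode μ k x ++ [tentBit μ x k] := by
  simp [tentCode, List.range_succ]

theorem tentCode_succ_eq_iff {x y : ℝ} :
    tentCode μ (k + 1) x = tentCode μ (k + 1) y ↔
      tentCode μ k x = tentCode μ k y ∧ tentBit μ x k = tentBit μ y k := by
  simp [tentCode_succ]

theorem tentCode_succ_eq_map_not_iff {x y : ℝ} :
    tentCode μ (k + 1) x = (tentCode μ (k + 1) y).map (fun b => !b) ↔
      tentCode μ k x = (tentCode μ k y).map (fun b => !b) ∧
        tentBit μ x k = !tentBit μ y k := by
  simp [tentCode_succ]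

theorem kneadEnd_succ_le (hμ : 1 < μ) (hk : 1 ≤ k) : kneadEnd μ (k + 1) ≤ kneadEnd μ k := by
  by_cases hcut : IsCut μ k
  · rw [kneadEnd_succ_of_isCut hcut]
    exact (cutPoint_mem hμ hk hcut).1.2.le
  · rw [kneadEnd_succ_of_not_isCut hcut]

theorem iterate_kneadEnd_ne_half (hμ : 1 < μ) (hk : 1 ≤ k)
    (hcrit : ∀ i, 1 ≤ i → i < k → (tentMap μ)^[i] (1/2) ≠ 1/2) :
    (tentMap μ)^[k] (kneadEnd μ k) ≠ 1/2 := by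
  rcases hk.eq_or_lt with rfl | hk2
  · rw [kneadEnd_one, Function.iterate_one, tentMap_one]
    norm_num
  obtain ⟨S, hS, hSk, hcutS, hno⟩ := exists_last_isCut hμ (n := k - 1) (by omega)
  rw [iterate_kneadEnd_eq hμ hS hcutS (by omega) fun i h1 h2 => hno i h1 (by omega)]
  exact hcrit _ (by omega) (by omega)

theorem iterate_sub_half_eq (hμ : 1 < μ) (hk : 1 ≤ k) (hcut : IsCut μ k) {z : ℝ}
    (hz : z ∈ Icc (1/2) (kneadEnd μ k)) :
    (tentMap μ)^[k] z - 1/2 =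
      ((tentMap μ)^[k] (1/2) - 1/2) * ((cutPoint μ k - z) / (cutPoint μ k - 1/2)) := by
  obtain ⟨⟨hy1, hy2⟩, hy⟩ := cutPoint_mem hμ hk hcut
  obtain ⟨a, -, hf⟩ := (cylinderGeometry hμ hk).affine
  have e1 := hf z hz
  have e2 := hf _ ⟨hy1.le, hy2.le⟩
  rw [hy] at e2
  rw [← mul_div_assoc, eq_div_iff (sub_pos.2 hy1).ne']
  linear_combination (cutPoint μ k - 1/2) * e1 - (z - 1/2) * e2

theorem mul_pos_of_lt_cutPoint (hμ : 1 < μ) (hk : 1 ≤ k) (hcut : IsCut μ k) {z : ℝ}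
    (hz : 1/2 ≤ z) (hzy : z < cutPoint μ k) :
    0 < ((tentMap μ)^[k] z - 1/2) * ((tentMap μ)^[k] (1/2) - 1/2) := by
  have hy := (cutPoint_mem hμ hk hcut).1
  rw [iterate_sub_half_eq hμ hk hcut ⟨hz, hzy.le.trans hy.2.le⟩, mul_right_comm]
  exact mul_pos (mul_self_pos.2 (sub_ne_zero.2 hcut.iterate_half_ne))
    (div_pos (sub_pos.2 hzy) (sub_pos.2 hy.1))

theorem mul_neg_of_cutPoint_lt (hμ : 1 < μ) (hk : 1 ≤ k) (hcut : IsCut μ k) {z : ℝ}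
    (hyz : cutPoint μ k < z) (hz : z ≤ kneadEnd μ k) :
    ((tentMap μ)^[k] z - 1/2) * ((tentMap μ)^[k] (1/2) - 1/2) < 0 := by
  have hy := (cutPoint_mem hμ hk hcut).1
  rw [iterate_sub_half_eq hμ hk hcut ⟨hy.1.le.trans hyz.le, hz⟩, mul_right_comm]
  exact mul_neg_of_pos_of_neg (mul_self_pos.2 (sub_ne_zero.2 hcut.iterate_half_ne))
    (div_neg_of_neg_of_pos (sub_neg.2 hyz) (sub_pos.2 hy.1))

theorem mul_pos_of_not_isCut (hμ : 1 < μ) (hk : 1 ≤ k) (hcut : ¬IsCut μ k)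
    (hv : (tentMap μ)^[k] (1/2) ≠ 1/2) (hw : (tentMap μ)^[k] (kneadEnd μ k) ≠ 1/2) {z : ℝ}
    (hz : z ∈ Icc (1/2) (kneadEnd μ k)) :
    0 < ((tentMap μ)^[k] z - 1/2) * ((tentMap μ)^[k] (1/2) - 1/2) := by
  obtain ⟨a, -, hf⟩ := (cylinderGeometry hμ hk).affine
  have hmem :
      (tentMap μ)^[k] z ∈ uIcc ((tentMap μ)^[k] (1/2)) ((tentMap μ)^[k] (kneadEnd μ k)) := by
    rw [← image_Icc_of_affine (cylinderGeometry hμ hk).half_lt.le hf]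
    exact mem_image_of_mem _ hz
  have hvw : 0 < ((tentMap μ)^[k] (1/2) - 1/2) * ((tentMap μ)^[k] (kneadEnd μ k) - 1/2) :=
    (not_lt.1 hcut).lt_of_ne (mul_ne_zero (sub_ne_zero.2 hv) (sub_ne_zero.2 hw)).symm
  rcases pos_and_pos_or_neg_and_neg_of_mul_pos hvw with ⟨h1, h2⟩ | ⟨h1, h2⟩ <;>
    rcases mem_uIcc.1 hmem with h | h <;> nlinarith [h.1, h.2]

theorem tentBit_eq_half_iff (hμ : 1 < μ) (hk : 1 ≤ k) (hv : (tentMap μ)^[k] (1/2) ≠ 1/2)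
    (hw : (tentMap μ)^[k] (kneadEnd μ k) ≠ 1/2)
    (hbit : IsCut μ k → tentBit μ (1/2) k = false) {x : ℝ}
    (hx : x ∈ Ico (1/2) (kneadEnd μ k))
    (hcode : tentCode μ k x = tentCode μ k (1/2)) :
    tentBit μ x k = tentBit μ (1/2) k ↔ x < kneadEnd μ (k + 1) := by
  obtain ⟨m, rfl⟩ := Nat.exists_eq_add_of_le' hk
  have hprev := (tentCode_succ_eq_iff.1 hcode).2
  by_cases hcut : IsCut μ (m + 1)
  · have hy := cutPoint_mem hμ hk hcut
    rw [kneadEnd_succ_of_isCut hcut]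
    rcases lt_trichotomy x (cutPoint μ (m + 1)) with h | rfl | h
    · exact iff_of_true ((tentBit_succ_eq_iff_of_mul_pos
        (mul_pos_of_lt_cutPoint hμ hk hcut hx.1 h)).2 hprev) h
    · rw [tentBit_succ_of_eq hy.2, hbit hcut]
      exact iff_of_false (by decide) (lt_irrefl _)
    · rw [tentBit_succ_eq_iff_of_mul_neg (mul_neg_of_cutPoint_lt hμ hk hcut h hx.2.le)]
      exact iff_of_false (not_not.2 hprev) h.not_gt
  · rw [kneadEnd_succ_of_not_isCut hcut, tentBit_succ_eq_iff_of_mul_pos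
      (mul_pos_of_not_isCut hμ hk hcut hv hw (Ico_subset_Icc_self hx))]
    exact iff_of_true hprev hx.2

theorem tentBit_ne_half_iff (hμ : 1 < μ) (hk : 1 ≤ k) (hv : (tentMap μ)^[k] (1/2) ≠ 1/2)
    (hw : (tentMap μ)^[k] (kneadEnd μ k) ≠ 1/2)
    (hbit : IsCut μ k → tentBit μ (1/2) k = false) {x : ℝ}
    (hx : x ∈ Ico (1 - kneadEnd μ k) (1/2))
    (hcode : tentCode μ k x = (tentCode μ k (1/2)).map (fun b => !b)) :
    tentBit μ x k ≠ tentBit μ (1/2) k ↔ 1 - kneadEnd μ (k + 1) ≤ x := by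
  obtain ⟨m, rfl⟩ := Nat.exists_eq_add_of_le' hk
  have hprev : tentBit μ x m ≠ tentBit μ (1/2) m := by
    rw [(tentCode_succ_eq_map_not_iff.1 hcode).2]
    cases tentBit μ (1/2) m <;> decide
  have hmir : (tentMap μ)^[m + 1] x = (tentMap μ)^[m + 1] (1 - x) :=
    (iterate_tentMap_one_sub hk x).symm
  have hz : 1 - x ∈ Icc (1/2) (kneadEnd μ (m + 1)) :=
    ⟨by linarith [hx.2], by linarith [hx.1]⟩
  by_cases hcut : IsCut μ (m + 1)
  · have hy := cutPoint_mem hμ hk hcut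
    rw [kneadEnd_succ_of_isCut hcut]
    rcases lt_trichotomy (1 - x) (cutPoint μ (m + 1)) with h | h | h
    · have hs := mul_pos_of_lt_cutPoint hμ hk hcut hz.1 h
      rw [← hmir] at hs
      exact iff_of_true (mt (tentBit_succ_eq_iff_of_mul_pos hs).1 hprev) (by linarith)
    · rw [tentBit_succ_of_eq (by rw [hmir, h, hy.2]), hbit hcut]
      exact iff_of_true (by decide) (by linarith)
    · have hs := mul_neg_of_cutPoint_lt hμ hk hcut h hz.2
      rw [← hmir] at hs
      exact iff_of_false (not_not.2 ((tentBit_succ_eq_iff_of_mul_neg hs).2 hprev)) (by linarith)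
  · have hs := mul_pos_of_not_isCut hμ hk hcut hv hw hz
    rw [← hmir] at hs
    rw [kneadEnd_succ_of_not_isCut hcut]
    exact iff_of_true (mt (tentBit_succ_eq_iff_of_mul_pos hs).1 hprev) hx.1

theorem tentCode_eq_tentCode_half_iff (hμ : 1 < μ) (hk : 1 ≤ k)
    (hcrit : ∀ i, 1 ≤ i → i < k → (tentMap μ)^[i] (1/2) ≠ 1/2) {x : ℝ}
    (hx : x ∈ Ico (0:ℝ) 1) :
    tentCode μ k x = tentCode μ k (1/2) ↔ x ∈ Ico (1/2) (kneadEnd μ k) := by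
  induction k, hk using Nat.le_induction with
  | base =>
    simp [tentCode, tentBit, kneadEnd_one, hx.2]
  | succ k hk ih =>
    have hcrit' : ∀ i, 1 ≤ i → i < k → (tentMap μ)^[i] (1/2) ≠ 1/2 :=
      fun i h1 h2 => hcrit i h1 (by omega)
    have hstep := tentBit_eq_half_iff hμ hk (hcrit k hk (by omega))
      (iterate_kneadEnd_ne_half hμ hk hcrit')
      (fun hcut => tentBit_half_of_isCut hμ hk hcut hcrit')
      (x := x)
    rw [tentCode_succ_eq_iff, ih hcrit']
    constructor
    · rintro ⟨hxI, hbit⟩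
      exact ⟨hxI.1, (hstep hxI ((ih hcrit').2 hxI)).1 hbit⟩
    · intro hxI
      have hxI' : x ∈ Ico (1/2) (kneadEnd μ k) :=
        ⟨hxI.1, hxI.2.trans_le (kneadEnd_succ_le hμ hk)⟩
      exact ⟨hxI', (hstep hxI' ((ih hcrit').2 hxI')).2 hxI.2⟩

theorem tentCode_eq_map_not_iff (hμ : 1 < μ) (hk : 1 ≤ k)
    (hcrit : ∀ i, 1 ≤ i → i < k → (tentMap μ)^[i] (1/2) ≠ 1/2) {x : ℝ}
    (hx : x ∈ Ico (0:ℝ) 1) :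
    tentCode μ k x = (tentCode μ k (1/2)).map (fun b => !b) ↔
      x ∈ Ico (1 - kneadEnd μ k) (1/2) := by
  induction k, hk using Nat.le_induction with
  | base =>
    simp [tentCode, tentBit, kneadEnd_one, hx.1]
  | succ k hk ih =>
    have hcrit' : ∀ i, 1 ≤ i → i < k → (tentMap μ)^[i] (1/2) ≠ 1/2 :=
      fun i h1 h2 => hcrit i h1 (by omega)
    have hstep := tentBit_ne_half_iff hμ hk (hcrit k hk (by omega))
      (iterate_kneadEnd_ne_half hμ hk hcrit')
      (fun hcut => tentBit_half_of_isCut hμ hk hcut hcrit')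
      (x := x)
    rw [tentCode_succ_eq_map_not_iff, ih hcrit']
    constructor
    · rintro ⟨hxI, hbit⟩
      exact ⟨(hstep hxI ((ih hcrit').2 hxI)).1 (Bool.eq_not_iff.1 hbit), hxI.2⟩
    · intro hxI
      have hxI' : x ∈ Ico (1 - kneadEnd μ k) (1/2) :=
        ⟨(sub_le_sub_left (kneadEnd_succ_le hμ hk) 1).trans hxI.1, hxI.2⟩
      exact ⟨hxI', Bool.eq_not_iff.2 ((hstep hxI' ((ih hcrit').2 hxI')).2 hxI.1)⟩

theorem tentCode_succ_eq_append_true_iff (hμ : 1 < μ) (hk : 1 ≤ k) (hcut : IsCut μ k)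
    (hcrit : ∀ i, 1 ≤ i → i < k → (tentMap μ)^[i] (1/2) ≠ 1/2) {x : ℝ}
    (hx : x ∈ Ico (0:ℝ) 1) :
    tentCode μ (k + 1) x = tentCode μ k (1/2) ++ [true] ↔
      x ∈ Ico (cutPoint μ k) (kneadEnd μ k) := by
  have hbit := tentBit_half_of_isCut hμ hk hcut hcrit
  have hstep := tentBit_eq_half_iff hμ hk hcut.iterate_half_ne hcut.iterate_kneadEnd_ne
    (fun _ => hbit) (x := x)
  rw [kneadEnd_succ_of_isCut hcut, hbit] at hstep
  have hy := (cutPoint_mem hμ hk hcut).1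
  rw [tentCode_succ, List.append_singleton_inj, tentCode_eq_tentCode_half_iff hμ hk hcrit hx]
  constructor
  · rintro ⟨hxI, hb⟩
    refine ⟨not_lt.1 fun h => ?_, hxI.2⟩
    have h' := (hstep hxI ((tentCode_eq_tentCode_half_iff hμ hk hcrit hx).2 hxI)).2 h
    rw [hb] at h'
    exact Bool.noConfusion h'
  · rintro ⟨h1, h2⟩
    have hxI : x ∈ Ico (1/2) (kneadEnd μ k) := ⟨hy.1.le.trans h1, h2⟩
    refine ⟨hxI, ?_⟩
    have h' := mt (hstep hxI ((tentCode_eq_tentCode_half_iff hμ hk hcrit hx).2 hxI)).1 h1.not_gt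
    simpa using h'

end Cylinders

section Transition

variable {μ : ℝ}

theorem segType_eq_image {n : ℕ} {w : List Bool} {J : Set ℝ} (hJ : J ⊆ Ico 0 1)
    (h : ∀ x ∈ Ico (0:ℝ) 1, tentCode μ n x = w ↔ x ∈ J) :
    segType μ n w = (tentMap μ)^[n] '' J := by
  ext y
  constructor
  · rintro ⟨x, hx, hcode, rfl⟩
    exact mem_image_of_mem _ ((h x hx).1 hcode)
  · rintro ⟨x, hxJ, rfl⟩
    exact ⟨x, hJ hxJ, (h x (hJ hxJ)).2 hxJ, rfl⟩

theorem segType_append_true_eq_Isegbar (hμ : 1 < μ) {S k : ℕ} (hS : 1 ≤ S)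
    (hcutS : IsCut μ S) (hSk : S < k) (hno : ∀ i, S < i → i < k → ¬IsCut μ i)
    (hcutk : IsCut μ k)
    (hcrit : ∀ i, 1 ≤ i → i < k → (tentMap μ)^[i] (1/2) ≠ 1/2) :
    segType μ (k + 1) (tentCode μ k (1/2) ++ [true]) = Isegbar μ (k - S + 1) := by
  have hk : 1 ≤ k := by omega
  have hk' : 1 ≤ k - S := by omega
  have hcut' := isCut_sub hμ hS hcutS hSk hno hcutk
  have hy := (cutPoint_mem hμ hk hcutk).1
  have hr := (cylinderGeometry hμ hk).le_one
  have hr' := (cylinderGeometry hμ (by omega : 1 ≤ k - S + 1)).le_one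
  have hlhs : segType μ (k + 1) (tentCode μ k (1/2) ++ [true]) =
      (tentMap μ)^[k + 1] '' Ico (cutPoint μ k) (kneadEnd μ k) :=
    segType_eq_image (fun x hx => ⟨by linarith [hx.1, hy.1], by linarith [hx.2]⟩)
      fun x hx => tentCode_succ_eq_append_true_iff hμ hk hcutk hcrit hx
  have hrhs : Isegbar μ (k - S + 1) =
      (tentMap μ)^[k - S + 1] '' Ico (1 - kneadEnd μ (k - S + 1)) (1/2) :=
    segType_eq_image (fun x hx => ⟨by linarith [hx.1], by linarith [hx.2]⟩)
      fun x hx => tentCode_eq_map_not_iff hμ (by omega) (fun i h1 h2 => hcrit i h1 (by omega)) hx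
  rw [hlhs, hrhs, kneadEnd_succ_of_isCut hcut', Function.iterate_succ', Function.iterate_succ',
    image_comp, image_comp, image_Ico_cutPoint hμ hk hcutk,
    image_Ico_one_sub_cutPoint hμ hk' hcut', iterate_kneadEnd_eq hμ hS hcutS hSk hno]

end Transition

theorem exists_back_transition_general (μ : ℝ) (hμ1 : 1 < μ)
    (n : ℕ) (hn : 1 ≤ n)
    (hcrit : ∀ i : ℕ, 1 ≤ i → i ≤ 2*n - 1 → (tentMap μ)^[i] (1/2) ≠ 1/2) :
    ∃ k : ℕ, n + 1 ≤ k ∧ k ≤ 2*n ∧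
      ∃ (b : Bool) (w : List Bool),
        w ∈ tentLang μ k ∧ segType μ k w = Iseg μ k ∧
        w ++ [b] ∈ tentLang μ (k+1) ∧
        ∃ k' : ℕ, 1 ≤ k' ∧ 2 * k' ≤ k ∧
          segType μ (k+1) (w ++ [b]) = Isegbar μ (k'+1) := by
  obtain ⟨S, hS, hSn, hcutS, hnoS⟩ := exists_last_isCut hμ1 hn
  obtain ⟨k, hSk, hk2S, hcutk, hno⟩ := exists_next_isCut hμ1 hS hcutS
  have hnk : n < k := by
    by_contra! h
    exact hnoS k hSk h hcutk
  have hcrit' : ∀ i, 1 ≤ i → i < k → (tentMap μ)^[i] (1/2) ≠ 1/2 :=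
    fun i h1 h2 => hcrit i h1 (by omega)
  obtain ⟨⟨hy1, hy2⟩, -⟩ := cutPoint_mem hμ1 (by omega) hcutk
  have hr := (cylinderGeometry hμ1 (by omega : 1 ≤ k)).le_one
  refine ⟨k, hnk, by omega, true, tentCode μ k (1/2), ⟨1/2, by norm_num, rfl⟩, rfl,
    ⟨cutPoint μ k, ⟨by linarith, by linarith⟩,
      (tentCode_succ_eq_append_true_iff hμ1 (by omega) hcutk hcrit'
        ⟨by linarith, by linarith⟩).2 ⟨le_rfl, hy2⟩⟩,
    k - S, by omega, by omega, segType_append_true_eq_Isegbar hμ1 hS hcutS hSk hno hcutk hcrit'⟩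

/-- between levels `n+1` and `2n` there is at least one transition
decreasing the level to at most (roughly) a half. -/
theorem exists_back_transition (μ : ℝ) (hμ1 : 1 < μ) (hμ2 : μ < 2)
    (n : ℕ) (hn : 1 ≤ n)
    (hcrit : ∀ i : ℕ, 1 ≤ i → i ≤ 2*n - 1 → (tentMap μ)^[i] (1/2) ≠ 1/2) :
    ∃ k : ℕ, n + 1 ≤ k ∧ k ≤ 2*n ∧
      ∃ (b : Bool) (w : List Bool),
        w ∈ tentLang μ k ∧ segType μ k w = Iseg μ k ∧
        w ++ [b] ∈ tentLang μ (k+1) ∧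
        ∃ k' : ℕ, 1 ≤ k' ∧ 2 * k' ≤ k ∧
          segType μ (k+1) (w ++ [b]) = Isegbar μ (k'+1) :=
  exists_back_transition_general μ hμ1 n hn hcrit
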